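/- arXiv:2409.17511 — 2 statements merged into one kernel-verified Lean document; each statement's English description precedes it below -/
import Mathlib

section
/- Fix i ∈ [n]. If there is a time T such that |E_t| − |N_i(t)| ≥ 1 for all t ≥ T, then the sequence x_i(t) converges as t → ∞. -/
open Finset
open scoped Classical

/-- The threshold graph `G_t`: social neighbors whose garbage differs by at most `ε`. -/
def Gt {n : ℕ} (G : SimpleGraph (Fin n)) (x : ℕ → Fin n → ℝ) (ε : ℝ) (t : ℕ) :
    SimpleGraph (Fin n) where
  Adj i j := G.Adj i j ∧ |x t i - x t j| ≤ ε
  symm := by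
    refine ⟨fun i j h => ?_⟩
    exact ⟨h.1.symm, by rw [abs_sub_comm]; exact h.2⟩
  loopless := by
    refine ⟨fun i h => ?_⟩
    exact G.irrefl h.1

/-- `|E_t|`: the number of edges of `G_t`. -/
noncomputable def Ecard {n : ℕ} (G : SimpleGraph (Fin n)) (x : ℕ → Fin n → ℝ) (ε : ℝ)
    (t : ℕ) : ℕ :=
  (Gt G x ε t).edgeSet.ncard

/-- `N_i(t)`: the neighbors of `i` in `G_t`, as a finset. -/
noncomputable def Nb {n : ℕ} (G : SimpleGraph (Fin n)) (x : ℕ → Fin n → ℝ) (ε : ℝ)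
    (t : ℕ) (i : Fin n) : Finset (Fin n) :=
  Finset.univ.filter fun j => (Gt G x ε t).Adj i j

/-- The update rule of the garbage disposal game. -/
def Update {n : ℕ} (G : SimpleGraph (Fin n)) (x : ℕ → Fin n → ℝ) (ε : ℝ) : Prop :=
  ∀ t i,
    x (t + 1) i =
      (if (Gt G x ε t).edgeSet.Nonempty then (1 : ℝ) else 0) / (Ecard G x ε t : ℝ) *
          ∑ j ∈ Nb G x ε t i, x t j +
        (1 - ((Nb G x ε t i).card : ℝ) / (Ecard G x ε t : ℝ) *
            (if (Gt G x ε t).edgeSet.Nonempty then (1 : ℝ) else 0)) * x t i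

/-- The Lyapunov functional `Z_t`. -/
noncomputable def Z {n : ℕ} (G : SimpleGraph (Fin n)) (x : ℕ → Fin n → ℝ) (ε : ℝ)
    (t : ℕ) : ℝ :=
  ∑ i, ∑ j,
    max (min (ε ^ 2) ((x t i - x t j) ^ 2)) (ε ^ 2 * if ¬ G.Adj i j then 1 else 0)

/-!
Each step of the game multiplies `x(t)` by the matrix `W_t` of the lazy random walk on `G_t`
that moves along each edge with probability `1 / |E_t|`; it is symmetric and doubly
stochastic. Doubly stochastic maps never decrease the sum of the `k` smallest entries, and this
sum is at most `k / n` times the conserved total, so it converges; hence each order statistic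
of `x(t)` converges. They also never increase `∑ x_j²`, and the decrease dominates
`W_t i i (x_i(t+1) - x_i(t))²`; the hypothesis gives `W_t i i ≥ 1 / |E_t| ≥ 1 / |E|`, so the
increments of `x_i` tend to `0`. Since `x_i(t)` is always one of the order statistics, it
eventually cannot jump between their distinct limits.
-/

open Filter Topology Matrix

section SumSmallest

variable {ι : Type*} [Fintype ι]

/-- For `k > Fintype.card ι` this is an infimum over an empty type, hence `0`. -/
noncomputable def sumSmallest (y : ι → ℝ) (k : ℕ) : ℝ :=
  ⨅ S : {S : Finset ι // S.card = k}, ∑ j ∈ S.1, y j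

theorem sumSmallest_le_sum (y : ι → ℝ) {S : Finset ι} :
    sumSmallest y S.card ≤ ∑ j ∈ S, y j :=
  ciInf_le (Set.finite_range _).bddBelow (⟨S, rfl⟩ : {T : Finset ι // T.card = S.card})

theorem exists_sum_eq_sumSmallest (y : ι → ℝ) {k : ℕ} (hk : k ≤ Fintype.card ι) :
    ∃ S : Finset ι, S.card = k ∧ ∑ j ∈ S, y j = sumSmallest y k := by
  obtain ⟨S, -, hS⟩ := Finset.exists_subset_card_eq (s := Finset.univ) (by simpa using hk)
  have : Nonempty {S : Finset ι // S.card = k} := ⟨⟨S, hS⟩⟩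
  obtain ⟨⟨S, hS⟩, h⟩ :=
    exists_eq_ciInf_of_finite (f := fun S : {S : Finset ι // S.card = k} => ∑ j ∈ S.1, y j)
  exact ⟨S, hS, h⟩

theorem le_of_sum_eq_sumSmallest {y : ι → ℝ} {S : Finset ι}
    (hS : ∑ j ∈ S, y j = sumSmallest y S.card) {j l : ι} (hj : j ∈ S) (hl : l ∉ S) :
    y j ≤ y l := by
  set S' := insert l (S.erase j)
  have hcard : S'.card = S.card := by
    rw [Finset.card_insert_of_notMem (fun h => hl (Finset.mem_of_mem_erase h)),
      Finset.card_erase_add_one hj]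
  have hsum : ∑ m ∈ S', y m + y j = ∑ m ∈ S, y m + y l := by
    rw [Finset.sum_insert (fun h => hl (Finset.mem_of_mem_erase h)),
      ← Finset.sum_erase_add _ _ hj]
    ring
  have := hcard ▸ sumSmallest_le_sum y (S := S')
  linarith

theorem sum_le_sum_mul_of_forall_le {y w : ι → ℝ} {F : Finset ι}
    (hF : ∀ j ∈ F, ∀ l ∉ F, y j ≤ y l) (hw₀ : ∀ j, 0 ≤ w j) (hw₁ : ∀ j, w j ≤ 1)
    (hw : ∑ j, w j = F.card) : ∑ j ∈ F, y j ≤ ∑ j, w j * y j := by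
  rcases F.eq_empty_or_nonempty with rfl | hne
  · have : ∀ j, w j = 0 := fun j =>
      (Finset.sum_eq_zero_iff_of_nonneg fun j _ => hw₀ j).1 (by simpa using hw) j
        (Finset.mem_univ j)
    simp [this]
  set c := F.sup' hne y
  have key : ∀ j, 0 ≤ (w j - if j ∈ F then 1 else 0) * (y j - c) := by
    intro j
    by_cases hj : j ∈ F
    · simpa [hj] using mul_nonneg_of_nonpos_of_nonpos (sub_nonpos.2 (hw₁ j))
        (sub_nonpos.2 (F.le_sup' y hj))
    · simpa [hj] using mul_nonneg (hw₀ j)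
        (sub_nonneg.2 (Finset.sup'_le hne y fun m hm => hF m hm j hj))
  have hexp : ∑ j, (w j - if j ∈ F then 1 else 0) * (y j - c)
      = ∑ j, w j * y j - ∑ j ∈ F, y j - c * (∑ j, w j - F.card) := by
    simp only [sub_mul, mul_sub, Finset.sum_sub_distrib, ite_mul, one_mul, zero_mul,
      Finset.sum_ite_mem, Finset.univ_inter, ← Finset.sum_mul, Finset.sum_const, nsmul_eq_mul]
    ring
  have := Finset.sum_nonneg fun j (_ : j ∈ Finset.univ) => key j
  rw [hexp, hw, sub_self, mul_zero, sub_zero] at this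
  linarith

theorem sumSmallest_le_sum_mul (y : ι → ℝ) {k : ℕ} (hk : k ≤ Fintype.card ι) {w : ι → ℝ}
    (hw₀ : ∀ j, 0 ≤ w j) (hw₁ : ∀ j, w j ≤ 1) (hw : ∑ j, w j = k) :
    sumSmallest y k ≤ ∑ j, w j * y j := by
  obtain ⟨S, rfl, hS⟩ := exists_sum_eq_sumSmallest y hk
  rw [← hS]
  exact sum_le_sum_mul_of_forall_le (fun j hj l hl => le_of_sum_eq_sumSmallest hS hj hl)
    hw₀ hw₁ hw

theorem sumSmallest_card_eq_sum {y : ι → ℝ} {F : Finset ι}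
    (hF : ∀ j ∈ F, ∀ l ∉ F, y j ≤ y l) : sumSmallest y F.card = ∑ j ∈ F, y j := by
  refine (sumSmallest_le_sum y).antisymm ?_
  obtain ⟨S, hS, hSmin⟩ := exists_sum_eq_sumSmallest y (Finset.card_le_univ F)
  have := sum_le_sum_mul_of_forall_le hF (w := fun j => if j ∈ S then 1 else 0)
    (fun j => by positivity) (fun j => by split_ifs <;> norm_num) (by simp [hS])
  simpa [ite_mul, ← hSmin] using this

theorem exists_eq_sumSmallest_succ_sub (y : ι → ℝ) (i : ι) :
    ∃ k < Fintype.card ι, y i = sumSmallest y (k + 1) - sumSmallest y k := by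
  set R := Finset.univ.filter fun j => y j < y i
  have hiR : i ∉ R := by simp [R]
  have hR : sumSmallest y R.card = ∑ j ∈ R, y j :=
    sumSmallest_card_eq_sum fun j hj l hl => by
      simp only [R, Finset.mem_filter, Finset.mem_univ, true_and, not_lt] at hj hl
      linarith
  have hiR' : sumSmallest y (insert i R).card = ∑ j ∈ insert i R, y j :=
    sumSmallest_card_eq_sum fun j hj l hl => by
      simp only [R, Finset.mem_insert, Finset.mem_filter, Finset.mem_univ, true_and, not_or,
        not_lt] at hj hl
      rcases hj with rfl | hj <;> linarith [hl.2]
  refine ⟨R.card, Finset.card_lt_univ_of_notMem hiR, ?_⟩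
  rw [hR, ← Finset.card_insert_of_notMem hiR, hiR', Finset.sum_insert hiR]
  ring

theorem sumSmallest_le_mul_sum (y : ι → ℝ) {k : ℕ} (hk : k ≤ Fintype.card ι) :
    sumSmallest y k ≤ k / Fintype.card ι * ∑ j, y j := by
  rw [Finset.mul_sum]
  refine sumSmallest_le_sum_mul y hk (fun _ => by positivity)
    (fun _ => div_le_one_of_le₀ (by exact_mod_cast hk) (by positivity)) ?_
  rw [Finset.sum_const, Finset.card_univ, nsmul_eq_mul]
  rcases eq_or_ne (Fintype.card ι) 0 with h | h
  · simp [h, Nat.le_zero.1 (h ▸ hk)]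
  · field_simp

variable [DecidableEq ι]

theorem sumSmallest_le_sumSmallest_mulVec {M : Matrix ι ι ℝ}
    (hM : M ∈ doublyStochastic ℝ ι) (y : ι → ℝ) {k : ℕ} (hk : k ≤ Fintype.card ι) :
    sumSmallest y k ≤ sumSmallest (M *ᵥ y) k := by
  obtain ⟨S, rfl, hS⟩ := exists_sum_eq_sumSmallest (M *ᵥ y) hk
  have hrw : ∑ j ∈ S, (M *ᵥ y) j = ∑ l, (∑ j ∈ S, M j l) * y l := by
    simp only [mulVec, dotProduct, Finset.sum_mul]
    exact Finset.sum_comm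
  rw [← hS, hrw]
  refine sumSmallest_le_sum_mul y hk (fun l => Finset.sum_nonneg fun j _ =>
    nonneg_of_mem_doublyStochastic hM) (fun l => ?_) ?_
  · calc ∑ j ∈ S, M j l ≤ ∑ j, M j l :=
          Finset.sum_le_sum_of_subset_of_nonneg (Finset.subset_univ _)
            fun j _ _ => nonneg_of_mem_doublyStochastic hM
      _ = 1 := sum_col_of_mem_doublyStochastic hM l
  · rw [Finset.sum_comm]
    simp [sum_row_of_mem_doublyStochastic hM]

end SumSmallest

section DoublyStochastic

variable {ι : Type*} [Fintype ι] [DecidableEq ι] {M : Matrix ι ι ℝ}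

theorem sum_sq_sub_sum_sq_mulVec (hM : M ∈ doublyStochastic ℝ ι) (y : ι → ℝ) :
    ∑ j, y j ^ 2 - ∑ j, (M *ᵥ y) j ^ 2 = ∑ j, ∑ l, M j l * (y l - (M *ᵥ y) j) ^ 2 := by
  have hrow : ∀ j, ∑ l, M j l * (y l - (M *ᵥ y) j) ^ 2
      = ∑ l, M j l * y l ^ 2 - (M *ᵥ y) j ^ 2 := fun j => by
    set μ := (M *ᵥ y) j
    have hμ : ∑ l, M j l * y l = μ := rfl
    calc ∑ l, M j l * (y l - μ) ^ 2
        = ∑ l, M j l * y l ^ 2 - 2 * μ * ∑ l, M j l * y l + μ ^ 2 * ∑ l, M j l := by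
          simp only [Finset.mul_sum, ← Finset.sum_sub_distrib, ← Finset.sum_add_distrib]
          exact Finset.sum_congr rfl fun l _ => by ring
      _ = ∑ l, M j l * y l ^ 2 - μ ^ 2 := by
          rw [hμ, sum_row_of_mem_doublyStochastic hM j]
          ring
  have hcol : ∑ j, ∑ l, M j l * y l ^ 2 = ∑ l, y l ^ 2 := by
    rw [Finset.sum_comm]
    simp [← Finset.sum_mul, sum_col_of_mem_doublyStochastic hM]
  simp only [hrow, Finset.sum_sub_distrib, hcol]

theorem sum_sq_mulVec_le (hM : M ∈ doublyStochastic ℝ ι) (y : ι → ℝ) :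
    ∑ j, (M *ᵥ y) j ^ 2 ≤ ∑ j, y j ^ 2 := by
  have := sum_sq_sub_sum_sq_mulVec hM y
  have : 0 ≤ ∑ j, ∑ l, M j l * (y l - (M *ᵥ y) j) ^ 2 :=
    Finset.sum_nonneg fun j _ => Finset.sum_nonneg fun l _ =>
      mul_nonneg (nonneg_of_mem_doublyStochastic hM) (sq_nonneg _)
  linarith

theorem mul_sq_sub_mulVec_le (hM : M ∈ doublyStochastic ℝ ι) (y : ι → ℝ) (i : ι) :
    M i i * (y i - (M *ᵥ y) i) ^ 2 ≤ ∑ j, y j ^ 2 - ∑ j, (M *ᵥ y) j ^ 2 := by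
  have hnn : ∀ j l, 0 ≤ M j l * (y l - (M *ᵥ y) j) ^ 2 := fun j l =>
    mul_nonneg (nonneg_of_mem_doublyStochastic hM) (sq_nonneg _)
  rw [sum_sq_sub_sum_sq_mulVec hM y]
  calc M i i * (y i - (M *ᵥ y) i) ^ 2 ≤ ∑ l, M i l * (y l - (M *ᵥ y) i) ^ 2 :=
        Finset.single_le_sum (fun l _ => hnn i l) (Finset.mem_univ i)
    _ ≤ ∑ j, ∑ l, M j l * (y l - (M *ᵥ y) j) ^ 2 :=
        Finset.single_le_sum (f := fun j => ∑ l, M j l * (y l - (M *ᵥ y) j) ^ 2)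
          (fun j _ => Finset.sum_nonneg fun l _ => hnn j l) (Finset.mem_univ i)

end DoublyStochastic

/-- Once the increments of `u` are smaller than a third of the least gap between distinct
limits `v k`, `u` can no longer move from near one limit to near another. -/
theorem exists_tendsto_of_forall_exists_eq {κ : Type*} {s : Finset κ} {a : κ → ℕ → ℝ}
    {v : κ → ℝ} (ha : ∀ k ∈ s, Tendsto (a k) atTop (𝓝 (v k))) {u : ℕ → ℝ}
    (hu : ∀ t, ∃ k ∈ s, u t = a k t) (hdu : Tendsto (fun t => u (t + 1) - u t) atTop (𝓝 0)) :
    ∃ L, Tendsto u atTop (𝓝 L) := by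
  choose m hms hm using hu
  have hgap_nhds : ∀ᶠ δ in 𝓝 (0 : ℝ), ∀ k ∈ s, ∀ l ∈ s, v k ≠ v l → 3 * δ < |v k - v l| := by
    simp only [eventually_all_finset]
    intro k _ l _
    by_cases hkl : v k = v l
    · exact Eventually.of_forall fun _ h => absurd hkl h
    · have h3 : Tendsto (fun δ : ℝ => 3 * δ) (𝓝 0) (𝓝 0) := by
        simpa using (tendsto_id (x := 𝓝 (0 : ℝ))).const_mul 3
      exact (h3.eventually (gt_mem_nhds (abs_pos.2 (sub_ne_zero.2 hkl)))).mono fun _ h _ => h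
  obtain ⟨δ, hgap, hδ⟩ := ((hgap_nhds.filter_mono nhdsWithin_le_nhds).and
    (self_mem_nhdsWithin : Set.Ioi (0 : ℝ) ∈ 𝓝[>] 0)).exists
  have hnear : ∀ η > 0, ∀ᶠ t in atTop, ∀ k ∈ s, |a k t - v k| < η := fun η hη =>
    (eventually_all_finset s).2 fun k hk => by
      simpa only [Real.dist_eq] using Metric.tendsto_nhds.1 (ha k hk) η hη
  have hstep : ∀ᶠ t in atTop, |u (t + 1) - u t| < δ := by
    simpa only [Real.dist_eq, sub_zero] using Metric.tendsto_nhds.1 hdu δ hδ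
  obtain ⟨N, hN⟩ := eventually_atTop.1 ((hnear δ hδ).and hstep)
  have hconst : ∀ t ≥ N, v (m t) = v (m N) := by
    intro t ht
    induction t, ht using Nat.le_induction with
    | base => rfl
    | succ t ht ih =>
      rw [← ih]
      by_contra hne
      have h₁ := (hN t ht).1 _ (hms t)
      have h₂ := (hN (t + 1) (by omega)).1 _ (hms (t + 1))
      have h₃ := (hN t ht).2
      rw [hm t, hm (t + 1)] at h₃
      have := hgap _ (hms (t + 1)) _ (hms t) hne
      have := abs_sub_le (v (m (t + 1))) (a (m (t + 1)) (t + 1)) (v (m t))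
      have := abs_sub_le (a (m (t + 1)) (t + 1)) (a (m t) t) (v (m t))
      rw [abs_sub_comm] at h₂
      linarith
  refine ⟨v (m N), Metric.tendsto_nhds.2 fun η hη => ?_⟩
  filter_upwards [hnear η hη, eventually_ge_atTop N] with t ht htN
  rw [Real.dist_eq, hm t, ← hconst t htN]
  exact ht _ (hms t)

section Dynamics

variable {ι : Type*} [Fintype ι] [DecidableEq ι] {M : ℕ → Matrix ι ι ℝ}
  (hM : ∀ t, M t ∈ doublyStochastic ℝ ι) {y : ℕ → ι → ℝ} (hy : ∀ t, y (t + 1) = M t *ᵥ y t)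
include hM hy

theorem exists_tendsto_sumSmallest {k : ℕ} (hk : k ≤ Fintype.card ι) :
    ∃ L, Tendsto (fun t => sumSmallest (y t) k) atTop (𝓝 L) := by
  have hmono : Monotone fun t => sumSmallest (y t) k := monotone_nat_of_le_succ fun t => by
    rw [hy t]
    exact sumSmallest_le_sumSmallest_mulVec (hM t) _ hk
  have hsum : ∀ t, ∑ j, y t j = ∑ j, y 0 j := fun t => by
    induction t with
    | zero => rfl
    | succ t ih => rw [hy t, sum_mulVec_of_mem_doublyStochastic (hM t), ih]
  refine ⟨_, tendsto_atTop_ciSup hmono ⟨k / Fintype.card ι * ∑ j, y 0 j, ?_⟩⟩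
  rintro _ ⟨t, rfl⟩
  simpa only [hsum] using sumSmallest_le_mul_sum (y t) hk

theorem tendsto_sum_sq_sub_sum_sq_succ :
    Tendsto (fun t => ∑ j, y t j ^ 2 - ∑ j, y (t + 1) j ^ 2) atTop (𝓝 0) := by
  have hanti : Antitone fun t => ∑ j, y t j ^ 2 := antitone_nat_of_succ_le fun t => by
    rw [hy t]
    exact sum_sq_mulVec_le (hM t) _
  have hlim := tendsto_atTop_ciInf hanti
    ⟨0, by rintro _ ⟨t, rfl⟩; exact Finset.sum_nonneg fun j _ => sq_nonneg _⟩
  simpa using hlim.sub (hlim.comp (tendsto_add_atTop_nat 1))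

theorem tendsto_succ_sub_of_le_apply_self {δ : ℝ} (hδ : 0 < δ) {i : ι}
    (hii : ∀ᶠ t in atTop, δ ≤ M t i i) :
    Tendsto (fun t => y (t + 1) i - y t i) atTop (𝓝 0) := by
  have hsq : Tendsto (fun t => (y (t + 1) i - y t i) ^ 2) atTop (𝓝 0) := by
    refine tendsto_of_tendsto_of_tendsto_of_le_of_le' tendsto_const_nhds
      (by simpa using (tendsto_sum_sq_sub_sum_sq_succ hM hy).div_const δ)
      (Eventually.of_forall fun t => sq_nonneg _) (hii.mono fun t ht => ?_)
    rw [le_div_iff₀ hδ, hy t, sq, ← neg_sub, neg_mul_neg, ← sq, mul_comm]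
    exact (mul_le_mul_of_nonneg_right ht (sq_nonneg _)).trans
      (mul_sq_sub_mulVec_le (hM t) _ i)
  rw [tendsto_zero_iff_abs_tendsto_zero]
  simpa only [Function.comp_def, Real.sqrt_sq_eq_abs, Real.sqrt_zero] using hsq.sqrt

theorem exists_tendsto_of_le_apply_self {δ : ℝ} (hδ : 0 < δ) {i : ι}
    (hii : ∀ᶠ t in atTop, δ ≤ M t i i) : ∃ L, Tendsto (fun t => y t i) atTop (𝓝 L) := by
  choose! Ψ hΨ using fun k (hk : k ≤ Fintype.card ι) => exists_tendsto_sumSmallest hM hy hk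
  refine exists_tendsto_of_forall_exists_eq (s := Finset.range (Fintype.card ι))
    (a := fun k t => sumSmallest (y t) (k + 1) - sumSmallest (y t) k)
    (fun k hk => (hΨ (k + 1) (Finset.mem_range.1 hk)).sub
      (hΨ k (Finset.mem_range.1 hk).le))
    (fun t => ?_) (tendsto_succ_sub_of_le_apply_self hM hy hδ hii)
  obtain ⟨k, hk, h⟩ := exists_eq_sumSmallest_succ_sub (y t) i
  exact ⟨k, Finset.mem_range.2 hk, h⟩

end Dynamics

section LazyWalk

variable {V : Type*} [Fintype V] [DecidableEq V] (H : SimpleGraph V) [DecidableRel H.Adj]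

noncomputable def lazyWalk (m : ℝ) : Matrix V V ℝ :=
  m⁻¹ • H.adjMatrix ℝ + diagonal fun v => 1 - H.degree v / m

theorem lazyWalk_apply_self (m : ℝ) (v : V) : lazyWalk H m v v = 1 - H.degree v / m := by
  simp [lazyWalk]

theorem inv_le_lazyWalk_apply_self {m : ℝ} {v : V} (h : (H.degree v : ℝ) + 1 ≤ m) :
    m⁻¹ ≤ lazyWalk H m v v := by
  have hm : 0 < m := by linarith [(H.degree v).cast_nonneg (α := ℝ)]
  rw [lazyWalk_apply_self, inv_eq_one_div, le_sub_iff_add_le, ← add_div, div_le_one hm]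
  linarith

theorem lazyWalk_mulVec_apply (m : ℝ) (y : V → ℝ) (v : V) :
    (lazyWalk H m *ᵥ y) v =
      m⁻¹ * ∑ u ∈ H.neighborFinset v, y u + (1 - H.degree v / m) * y v := by
  simp [lazyWalk, add_mulVec, smul_mulVec, mulVec_diagonal]

theorem lazyWalk_mem_doublyStochastic {m : ℝ} (hm : ∀ v, (H.degree v : ℝ) ≤ m) :
    lazyWalk H m ∈ doublyStochastic ℝ V := by
  have hrow : ∀ v, ∑ w, lazyWalk H m v w = 1 := fun v => by
    have := lazyWalk_mulVec_apply H m 1 v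
    simp only [mulVec, dotProduct, Pi.one_apply, mul_one, Finset.sum_const,
      SimpleGraph.card_neighborFinset_eq_degree, nsmul_eq_mul] at this
    rw [this]
    ring
  have hsymm : (lazyWalk H m)ᵀ = lazyWalk H m := by
    simp [lazyWalk, transpose_add, transpose_smul]
  refine mem_doublyStochastic_iff_sum.2 ⟨fun v w => ?_, hrow, fun w => ?_⟩
  · have hm₀ : 0 ≤ m := (Nat.cast_nonneg _).trans (hm v)
    by_cases hvw : v = w
    · subst hvw
      rw [lazyWalk_apply_self, sub_nonneg]
      exact div_le_one_of_le₀ (hm v) hm₀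
    · simp only [lazyWalk, Matrix.add_apply, Matrix.smul_apply, diagonal_apply_ne _ hvw,
        add_zero, smul_eq_mul, SimpleGraph.adjMatrix_apply]
      exact mul_nonneg (inv_nonneg.2 hm₀) (by split_ifs <;> norm_num)
  · simpa only [← transpose_apply (lazyWalk H m) w, hsymm] using hrow w

end LazyWalk

section Game

variable {n : ℕ} (G : SimpleGraph (Fin n)) (x : ℕ → Fin n → ℝ) (ε : ℝ)

theorem Nb_eq_neighborFinset (t : ℕ) (i : Fin n) :
    Nb G x ε t i = (Gt G x ε t).neighborFinset i := by
  ext j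
  simp [Nb]

theorem card_Nb (t : ℕ) (i : Fin n) : (Nb G x ε t i).card = (Gt G x ε t).degree i := by
  rw [Nb_eq_neighborFinset, SimpleGraph.card_neighborFinset_eq_degree]

theorem degree_Gt_le_Ecard (t : ℕ) (i : Fin n) :
    ((Gt G x ε t).degree i : ℝ) ≤ Ecard G x ε t := by
  rw [Ecard, ← SimpleGraph.coe_edgeFinset, Set.ncard_coe_finset]
  exact_mod_cast (Gt G x ε t).degree_le_card_edgeFinset i

theorem Ecard_le_ncard_edgeSet (t : ℕ) : Ecard G x ε t ≤ G.edgeSet.ncard :=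
  Set.ncard_le_ncard (SimpleGraph.edgeSet_mono fun _ _ h => h.1) G.edgeSet.toFinite

variable {G x ε}

/-- When `G_t` has no edges, the junk value `· / 0 = 0` makes `lazyWalk` the identity, so the
game is a lazy random walk at every step. -/
theorem Update.eq_lazyWalk_mulVec (hupd : Update G x ε) (t : ℕ) :
    x (t + 1) = lazyWalk (Gt G x ε t) (Ecard G x ε t) *ᵥ x t := by
  funext i
  rw [hupd t i, lazyWalk_mulVec_apply, ← card_Nb, ← Nb_eq_neighborFinset]
  by_cases hE : (Gt G x ε t).edgeSet.Nonempty
  · simp [hE]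
  · have : Ecard G x ε t = 0 := by simp [Ecard, Set.not_nonempty_iff_eq_empty.1 hE]
    simp [hE, this]

end Game

theorem asymptotic_stability_general {n : ℕ} (G : SimpleGraph (Fin n)) (x : ℕ → Fin n → ℝ)
    (ε : ℝ) (hupd : Update G x ε) (i : Fin n)
    (h : ∃ T : ℕ, ∀ t, T ≤ t → (Nb G x ε t i).card + 1 ≤ Ecard G x ε t) :
    ∃ L : ℝ, Filter.Tendsto (fun t => x t i) Filter.atTop (nhds L) := by
  obtain ⟨T, hT⟩ := h
  have hE : ∀ t, T ≤ t → 0 < Ecard G x ε t := fun t ht => by have := hT t ht; omega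
  have hN : 0 < (G.edgeSet.ncard : ℝ) :=
    Nat.cast_pos.2 ((hE T le_rfl).trans_le (Ecard_le_ncard_edgeSet G x ε T))
  refine exists_tendsto_of_le_apply_self
    (fun t => lazyWalk_mem_doublyStochastic _ (degree_Gt_le_Ecard G x ε t))
    hupd.eq_lazyWalk_mulVec (inv_pos.2 hN) (eventually_atTop.2 ⟨T, fun t ht => ?_⟩)
  calc (G.edgeSet.ncard : ℝ)⁻¹ ≤ (Ecard G x ε t : ℝ)⁻¹ :=
        inv_anti₀ (Nat.cast_pos.2 (hE t ht)) (Nat.cast_le.2 (Ecard_le_ncard_edgeSet G x ε t))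
    _ ≤ _ := inv_le_lazyWalk_apply_self _ (by rw [← card_Nb]; exact_mod_cast hT t ht)

/-- Lemma 4: `x_i(t)` converges if `|E_t| − |N_i(t)| ≥ 1` after some time. -/
theorem asymptotic_stability {n : ℕ} (G : SimpleGraph (Fin n)) (x : ℕ → Fin n → ℝ)
    (ε : ℝ) (hε : 0 < ε) (hx0 : ∀ i, 0 ≤ x 0 i) (hupd : Update G x ε) (i : Fin n)
    (h : ∃ T : ℕ, ∀ t, T ≤ t → (Nb G x ε t i).card + 1 ≤ Ecard G x ε t) :
    ∃ L : ℝ, Filter.Tendsto (fun t => x t i) Filter.atTop (nhds L) :=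
  asymptotic_stability_general G x ε hupd i h
end

section
/- If some connected component H of the graph G_t is δ-nontrivial (i.e., there exist vertices i, j of H with |x_i(t) − x_j(t)| > δ), then ∑_{i ∈ V(H)} (x_i(t) − x_i(t+1))² > 2δ² / (|V(H)|⁶·|E_t|²). -/
open Finset
open scoped Classical

/-! Let `N = |V(H)|`. Since the values on `H` spread over more than `δ`, pigeonhole gives a
threshold `c` with no value in `(c, c + δ/N]`; the vertices of `H` above `c` form a set `A`, and
connectedness of `H` gives at least one edge of `G_t` leaving `A`. Edges inside `A` only exchange
garbage within `A`, so `A` loses at least `δ/(N |E_t|)` in total, and by Cauchy–Schwarz the squared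
moves on `A` sum to at least `δ²/(N³ |E_t|²)`, which beats `2δ²/(N⁶ |E_t|²)` because `N ≥ 2`. -/

/-- Pigeonhole: one of the `#s` intervals `(m + k g, m + (k+1) g]` above the minimum `m` misses
every value, since only `#s - 1` values lie above `m`. -/
theorem Finset.exists_gap {ι : Type*} (s : Finset ι) (y : ι → ℝ) {g : ℝ} (hg : 0 < g)
    {i j : ι} (hi : i ∈ s) (hj : j ∈ s) (hij : g * #s < y i - y j) :
    ∃ c, (∃ v ∈ s, c + g < y v) ∧ (∃ v ∈ s, y v ≤ c) ∧ ∀ v ∈ s, y v ≤ c ∨ c + g < y v := by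
  obtain ⟨m, hm, hmin⟩ := s.exists_min_image y ⟨i, hi⟩
  let slot : ι → ℕ := fun v => ⌈(y v - y m) / g⌉₊ - 1
  have hcard : #((s.erase m).image slot) < #(range #s) := by
    calc #((s.erase m).image slot) ≤ #(s.erase m) := card_image_le
      _ < #s := card_erase_lt_of_mem hm
      _ = #(range #s) := (card_range _).symm
  obtain ⟨k, hk, hk_free⟩ := exists_mem_notMem_of_card_lt_card hcard
  have hk' : (k : ℝ) + 1 ≤ #s := by exact_mod_cast mem_range.1 hk
  refine ⟨y m + k * g, ⟨i, hi, ?_⟩, ⟨m, hm, by simp only [le_add_iff_nonneg_right]; positivity⟩,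
    fun v hv => ?_⟩
  · nlinarith [hmin j hj]
  · by_contra! ⟨hlo, hhi⟩
    have hvm : v ≠ m := by rintro rfl; nlinarith [(Nat.cast_nonneg k : (0 : ℝ) ≤ k)]
    have hslot : slot v = k := by
      have hceil : ⌈(y v - y m) / g⌉₊ = k + 1 := by
        rw [Nat.ceil_eq_iff (Nat.succ_ne_zero k), lt_div_iff₀ hg, div_le_iff₀ hg]
        push_cast
        constructor <;> linarith
      simp only [slot, hceil, Nat.add_sub_cancel]
    exact hk_free (hslot ▸ mem_image_of_mem slot (mem_erase.2 ⟨hvm, hv⟩))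

namespace SimpleGraph

variable {V : Type*} {G : SimpleGraph V}

theorem ConnectedComponent.exists_cut [Fintype V] [DecidableEq V] [DecidableRel G.Adj]
    (C : G.ConnectedComponent) (y : V → ℝ) {g : ℝ} (hg : 0 < g) {i j : V} (hi : i ∈ C.supp) (hj : j ∈ C.supp)
    (hij : g * #C.supp.toFinset < |y i - y j|) :
    ∃ A ⊆ C.supp.toFinset, (∃ a ∈ A, ∃ b ∉ A, G.Adj a b) ∧
      ∀ u ∈ A, ∀ v ∉ A, G.Adj u v → g ≤ y u - y v := by
  set s := C.supp.toFinset
  obtain ⟨p, hp, q, hq, hpq⟩ : ∃ p ∈ s, ∃ q ∈ s, g * #s < y p - y q := by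
    rcases lt_abs.1 hij with h | h
    · exact ⟨i, Set.mem_toFinset.2 hi, j, Set.mem_toFinset.2 hj, h⟩
    · exact ⟨j, Set.mem_toFinset.2 hj, i, Set.mem_toFinset.2 hi, by linarith⟩
  obtain ⟨c, ⟨u, hu, hcu⟩, ⟨w, hw, hwc⟩, hgap⟩ := s.exists_gap y hg hp hq hpq
  refine ⟨s.filter (c < y ·), filter_subset _ _, ?_, ?_⟩
  · have walk := (C.reachable_of_mem_supp (Set.mem_toFinset.1 hu)
      (Set.mem_toFinset.1 hw)).some
    obtain ⟨d, -, hd_in, hd_out⟩ := walk.exists_boundary_dart (s.filter (c < y ·) : Set V)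
      (by simpa [hu] using by linarith) (by simp [hwc])
    exact ⟨d.fst, hd_in, d.snd, hd_out, d.adj⟩
  · intro u hu v hv huv
    rw [mem_filter] at hu hv
    have hvs : v ∈ s :=
      Set.mem_toFinset.2 (C.mem_supp_of_adj_mem_supp (Set.mem_toFinset.1 hu.1) huv)
    have hvc : y v ≤ c := not_lt.1 fun h => hv ⟨hvs, h⟩
    rcases hgap u hu.1 with h | h <;> linarith [hu.2]

/-- Edges inside `A` contribute opposite amounts to the total outflow of `A`, so only the cut
edges count. -/
theorem le_sum_sum_sub_of_cut [Fintype V] [DecidableRel G.Adj] (y : V → ℝ) (A : Finset V)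
    {g : ℝ} (hg : 0 ≤ g) (hcut : ∀ u ∈ A, ∀ v ∉ A, G.Adj u v → g ≤ y u - y v)
    {a b : V} (ha : a ∈ A) (hb : b ∉ A) (hab : G.Adj a b) :
    g ≤ ∑ u ∈ A, ∑ v ∈ univ.filter (G.Adj u), (y u - y v) := by
  let flow : V → V → ℝ := fun u v => if G.Adj u v then y u - y v else 0
  have hinside : ∑ u ∈ A, ∑ v ∈ A, flow u v = 0 := by
    have hanti : ∀ u v, flow v u = -flow u v := fun u v => by
      by_cases h : G.Adj u v
      · simp only [flow, h, h.symm, if_true]; ring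
      · have h' : ¬G.Adj v u := fun h' => h h'.symm
        simp only [flow, h, h', if_false, neg_zero]
    have : ∑ u ∈ A, ∑ v ∈ A, flow u v = -∑ u ∈ A, ∑ v ∈ A, flow u v :=
      calc ∑ u ∈ A, ∑ v ∈ A, flow u v = ∑ v ∈ A, ∑ u ∈ A, flow u v := sum_comm
        _ = ∑ v ∈ A, ∑ u ∈ A, -flow v u :=
          sum_congr rfl fun v _ => sum_congr rfl fun u _ => hanti v u
        _ = -∑ v ∈ A, ∑ u ∈ A, flow v u := by simp only [sum_neg_distrib]
    linarith
  have hflow_nonneg : ∀ u ∈ A, ∀ v ∈ Aᶜ, 0 ≤ flow u v := fun u hu v hv => by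
    by_cases h : G.Adj u v
    · simp only [flow, h, if_true]; linarith [hcut u hu v (mem_compl.1 hv) h]
    · simp only [flow, h, if_false, le_refl]
  calc g ≤ flow a b := by simp only [flow, hab, if_true]; exact hcut a ha b hb hab
    _ ≤ ∑ v ∈ Aᶜ, flow a v := single_le_sum (hflow_nonneg a ha) (mem_compl.2 hb)
    _ ≤ ∑ u ∈ A, ∑ v ∈ Aᶜ, flow u v :=
      single_le_sum (f := fun u => ∑ v ∈ Aᶜ, flow u v)
        (fun u hu => sum_nonneg (hflow_nonneg u hu)) ha
    _ = ∑ u ∈ A, ∑ v, flow u v := by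
      simp only [← sum_add_sum_compl A (flow _), sum_add_distrib, hinside, zero_add]
    _ = ∑ u ∈ A, ∑ v ∈ univ.filter (G.Adj u), (y u - y v) := by
      simp only [flow, sum_filter]

end SimpleGraph

theorem sq_div_card_le_sum_sq {ι : Type*} (s : Finset ι) (f : ι → ℝ) {g : ℝ} (hg : 0 ≤ g)
    (hgf : g ≤ ∑ i ∈ s, f i) : g ^ 2 / #s ≤ ∑ i ∈ s, f i ^ 2 :=
  div_le_of_le_mul₀ (Nat.cast_nonneg _) (sum_nonneg fun _ _ => sq_nonneg _) <|
    calc g ^ 2 ≤ (∑ i ∈ s, f i) ^ 2 := pow_le_pow_left₀ hg hgf 2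
      _ ≤ #s * ∑ i ∈ s, f i ^ 2 := sq_sum_le_card_mul_sum_sq
      _ = (∑ i ∈ s, f i ^ 2) * #s := mul_comm _ _

theorem Ecard_pos {n : ℕ} {G : SimpleGraph (Fin n)} {x : ℕ → Fin n → ℝ} {ε : ℝ} {t : ℕ}
    (hE : (Gt G x ε t).edgeSet.Nonempty) : 0 < Ecard G x ε t :=
  (Set.ncard_pos (Set.toFinite _)).2 hE

theorem Update.sub_succ {n : ℕ} {G : SimpleGraph (Fin n)} {x : ℕ → Fin n → ℝ} {ε : ℝ}
    (hupd : Update G x ε) {t : ℕ} (hE : (Gt G x ε t).edgeSet.Nonempty) (i : Fin n) :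
    x t i - x (t + 1) i = (∑ j ∈ Nb G x ε t i, (x t i - x t j)) / Ecard G x ε t := by
  rw [hupd t i, if_pos hE, sum_sub_distrib, sum_const, nsmul_eq_mul]
  ring

theorem delta_nontrivial_component_general {n : ℕ} (G : SimpleGraph (Fin n)) (x : ℕ → Fin n → ℝ)
    (ε : ℝ) (hupd : Update G x ε)
    (δ : ℝ) (hδ : 0 < δ) (t : ℕ) (H : (Gt G x ε t).ConnectedComponent)
    (hnontriv : ∃ i ∈ H.supp, ∃ j ∈ H.supp, δ < |x t i - x t j|) :
    ∑ i ∈ H.supp.toFinset, (x t i - x (t + 1) i) ^ 2 >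
      2 * δ ^ 2 / ((H.supp.ncard : ℝ) ^ 6 * (Ecard G x ε t : ℝ) ^ 2) := by
  obtain ⟨i, hi, j, hj, hij⟩ := hnontriv
  have hN : (2 : ℝ) ≤ #H.supp.toFinset := by
    have hne : i ≠ j := by rintro rfl; rw [sub_self, abs_zero] at hij; linarith
    exact_mod_cast one_lt_card.2 ⟨i, Set.mem_toFinset.2 hi, j, Set.mem_toFinset.2 hj, hne⟩
  have hg : 0 < δ / #H.supp.toFinset := by positivity
  obtain ⟨A, hAs, ⟨a, ha, b, hb, hab⟩, hcut⟩ :=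
    H.exists_cut (x t) hg hi hj (by rwa [div_mul_cancel₀ δ (by positivity)])
  have hE : (Gt G x ε t).edgeSet.Nonempty := ⟨s(a, b), hab⟩
  have hEpos : (0 : ℝ) < Ecard G x ε t := by exact_mod_cast Ecard_pos hE
  have hA : (0 : ℝ) < #A := by exact_mod_cast card_pos.2 ⟨a, ha⟩
  have hAN : (#A : ℝ) ≤ #H.supp.toFinset := by exact_mod_cast card_le_card hAs
  rw [Set.ncard_eq_toFinset_card' H.supp, gt_iff_lt]
  set N : ℝ := (#H.supp.toFinset : ℝ)
  set E : ℝ := (Ecard G x ε t : ℝ)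
  have hflow : δ / N / E ≤ ∑ i ∈ A, (x t i - x (t + 1) i) := by
    simp only [hupd.sub_succ hE, ← sum_div]
    exact div_le_div_of_nonneg_right
      (SimpleGraph.le_sum_sum_sub_of_cut (x t) A hg.le hcut ha hb hab) hEpos.le
  calc 2 * δ ^ 2 / (N ^ 6 * E ^ 2) < (δ / N / E) ^ 2 / N := by
        rw [div_lt_div_iff₀ (by positivity) (by positivity)]
        field_simp
        nlinarith [pow_le_pow_left₀ (by norm_num) hN 3]
    _ ≤ (δ / N / E) ^ 2 / #A := div_le_div_of_nonneg_left (sq_nonneg _) hA hAN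
    _ ≤ ∑ i ∈ A, (x t i - x (t + 1) i) ^ 2 := sq_div_card_le_sum_sq A _ (by positivity) hflow
    _ ≤ ∑ i ∈ H.supp.toFinset, (x t i - x (t + 1) i) ^ 2 :=
      sum_le_sum_of_subset_of_nonneg hAs fun i _ _ => sq_nonneg _

/-- Lemma 8 (first part): a δ-nontrivial component `H` of `G_t` forces
`∑_{i ∈ V(H)} (x_i(t) − x_i(t+1))² > 2δ² / (|V(H)|⁶ |E_t|²)`. -/
theorem delta_nontrivial_component {n : ℕ} (G : SimpleGraph (Fin n)) (x : ℕ → Fin n → ℝ)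
    (ε : ℝ) (hε : 0 < ε) (hx0 : ∀ i, 0 ≤ x 0 i) (hupd : Update G x ε)
    (δ : ℝ) (hδ : 0 < δ) (t : ℕ) (H : (Gt G x ε t).ConnectedComponent)
    (hnontriv : ∃ i ∈ H.supp, ∃ j ∈ H.supp, δ < |x t i - x t j|) :
    ∑ i ∈ H.supp.toFinset, (x t i - x (t + 1) i) ^ 2 >
      2 * δ ^ 2 / ((H.supp.ncard : ℝ) ^ 6 * (Ecard G x ε t : ℝ) ^ 2) :=
  delta_nontrivial_component_general G x ε hupd δ hδ t H hnontriv
end
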